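/- Let G = AB be a finite group factorized by subgroups A and B of coprime orders, and suppose the soluble radical of G is trivial, so that F*(G) = S_1 × ... × S_m is a direct product of nonabelian simple subgroups S_i which G permutes by conjugation; write S_iA = S_i ∩ A and S_iB = S_i ∩ B. Let K_A = ⋂ {N_G(S_i) : S_iA is not a p-group for any prime p} and K_B = ⋂ {N_G(S_i) : S_iB is not a p-group for any prime p}. Then K_A and K_B are normal subgroups of G, F*(A) ≤ K_A, and F*(B) ≤ K_B. -/

import Mathlib

open Subgroup

/-- The conjugate of a subgroup: `S ^ g = { g s g⁻¹ }`. -/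
def conjSubgroup {G : Type*} [Group G] (g : G) (S : Subgroup G) : Subgroup G :=
  S.map (MulAut.conj g).toMonoidHom

/-- A subgroup is subnormal if it can be joined to the whole group by a chain
of successive normal inclusions. -/
def Subgroup.IsSubnormalChain {G : Type*} [Group G] (H : Subgroup G) : Prop :=
  ∃ (n : ℕ) (c : Fin (n + 1) → Subgroup G), c 0 = H ∧ c (Fin.last n) = ⊤ ∧
    ∀ i : Fin n, c i.castSucc ≤ c i.succ ∧
      ∀ x ∈ c i.succ, ∀ h ∈ c i.castSucc, x * h * x⁻¹ ∈ c i.castSucc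

/-- A group is quasisimple if it is perfect and its central quotient is a
nonabelian simple group. -/
def IsQuasisimple (Q : Type*) [Group Q] : Prop :=
  commutator Q = ⊤ ∧ IsSimpleGroup (Q ⧸ Subgroup.center Q) ∧
    ∃ a b : Q ⧸ Subgroup.center Q, a * b ≠ b * a

/-- The Fitting subgroup: the product (join) of all nilpotent normal subgroups. -/
def fittingSubgroup (G : Type*) [Group G] : Subgroup G :=
  sSup {H : Subgroup G | H.Normal ∧ Group.IsNilpotent H}

/-- The generalized Fitting subgroup `F*(G)`: the product of the Fitting subgroup
and all subnormal quasisimple subgroups. -/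
def generalizedFitting (G : Type*) [Group G] : Subgroup G :=
  fittingSubgroup G ⊔ sSup {Q : Subgroup G | Q.IsSubnormalChain ∧ IsQuasisimple Q}

open scoped Classical in
/-- The generalized Fitting series, `F*_0(G) = 1` and `F*_{i+1}(G)` the preimage
of `F*(G / F*_i(G))`. (The terms of the series are indeed normal, so the `⊤`
default branch is never taken.) -/
noncomputable def generalizedFittingSeries (G : Type*) [Group G] : ℕ → Subgroup G
  | 0 => ⊥
  | n + 1 =>
    if h : (generalizedFittingSeries G n).Normal then
      letI := h
      (generalizedFitting (G ⧸ generalizedFittingSeries G n)).comap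
        (QuotientGroup.mk' (generalizedFittingSeries G n))
    else ⊤

/-- The generalized Fitting height `h*(G)`: the least `h` with `F*_h(G) = G`. -/
noncomputable def generalizedFittingHeight (G : Type*) [Group G] : ℕ :=
  sInf {h : ℕ | generalizedFittingSeries G h = ⊤}

open scoped Classical in
/-- The Fitting series. -/
noncomputable def fittingSeries (G : Type*) [Group G] : ℕ → Subgroup G
  | 0 => ⊥
  | n + 1 =>
    if h : (fittingSeries G n).Normal then
      letI := h
      (fittingSubgroup (G ⧸ fittingSeries G n)).comap
        (QuotientGroup.mk' (fittingSeries G n))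
    else ⊤

/-- The Fitting height. -/
noncomputable def fittingHeight (G : Type*) [Group G] : ℕ :=
  sInf {h : ℕ | fittingSeries G h = ⊤}

/-- The derived length: the least `n` with `G^{(n)} = 1`. -/
noncomputable def derivedLength (G : Type*) [Group G] : ℕ :=
  sInf {n : ℕ | derivedSeries G n = ⊥}

/-- The soluble radical: the product (join) of all soluble normal subgroups. -/
def solubleRadical (G : Type*) [Group G] : Subgroup G :=
  sSup {H : Subgroup G | H.Normal ∧ IsSolvable H}

/-- A group is an (internal) direct product of nonabelian simple groups. -/
def IsProdOfNonabelianSimples (Q : Type*) [Group Q] : Prop :=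
  ∃ (m : ℕ) (S : Fin m → Subgroup Q),
    (∀ i, (S i).Normal) ∧ (∀ i, IsSimpleGroup (S i)) ∧
    (∀ i, ∃ a b : S i, a * b ≠ b * a) ∧
    iSupIndep S ∧ iSup S = ⊤

/-- The section `M/N` (for `N ≤ M` with `N.subgroupOf M` normal) is soluble. -/
def SectionIsSolvable {G : Type*} [Group G] (N M : Subgroup G) : Prop :=
  N ≤ M ∧ ∃ _h : (N.subgroupOf M).Normal, IsSolvable (M ⧸ N.subgroupOf M)

/-- The section `M/N` is a direct product of nonabelian simple groups. -/
def SectionIsProdOfNonabelianSimples {G : Type*} [Group G] (N M : Subgroup G) : Prop :=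
  N ≤ M ∧ ∃ _h : (N.subgroupOf M).Normal,
    IsProdOfNonabelianSimples (M ⧸ N.subgroupOf M)

/-- The nonsoluble length `λ(G)`: the least number of nonsoluble factors in a
normal series each of whose factors either is soluble or is a direct product of
nonabelian simple groups. -/
noncomputable def nonsolubleLength (G : Type*) [Group G] : ℕ :=
  sInf {n : ℕ | ∃ (k : ℕ) (N : Fin (k + 1) → Subgroup G), Monotone N ∧
    N 0 = ⊥ ∧ N (Fin.last k) = ⊤ ∧ (∀ i, (N i).Normal) ∧
    (∀ i : Fin k, SectionIsSolvable (N i.castSucc) (N i.succ) ∨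
      SectionIsProdOfNonabelianSimples (N i.castSucc) (N i.succ)) ∧
    n = Nat.card {i : Fin k // ¬ SectionIsSolvable (N i.castSucc) (N i.succ)}}

/-!
Since `F = ⨆ i, S i` is normal in `G` and normalizes each `S i`, the index of `S i ⊓ A` in `S i`
divides `|G : A| = |B|`, which is coprime to `|A|`; hence `|S i ⊓ A| = gcd(|S i|, |A|)`. This
depends only on `|S i|`, so conjugation in `G` permutes the factors with `S i ⊓ A` not of prime
power order, and `K_A` is normal.

Let `S i ⊓ A` be of non-prime-power order. A normal `p`-subgroup `W` of `A` is normalized by a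
nontrivial `p'`-element `δ ∈ S i ⊓ A`. If `z ∈ W` moved `S i` to some `S j ≠ S i`, then `δ` and
`z δ z⁻¹` would commute, so `δ⁻¹ (z δ z⁻¹) ∈ W` would be a `p'`-element, hence trivial, and
`z δ z⁻¹ = δ` would lie in `S i ⊓ S j = 1`. As the Fitting subgroup of `A` is generated by such
`W`, it normalizes `S i`. A subnormal quasisimple subgroup of `A` either lies in the normal
subgroup `F ⊓ A`, which normalizes `S i`, or centralizes it and so fixes a nontrivial element of
`S i`; either way it normalizes `S i`.
-/
namespace Subgroup

variable {G : Type*} [Group G]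

theorem relIndex_dvd_index_of_normal_right [Finite G] (H : Subgroup G) {N : Subgroup G} [N.Normal] :
    H.relIndex N ∣ H.index := by
  have h₁ := relIndex_inf_mul_relIndex H N (H ⊔ N)
  have h₂ := relIndex_inf_mul_relIndex N H (H ⊔ N)
  rw [inf_of_le_left le_sup_right, relIndex_sup_right] at h₁
  rw [inf_of_le_left le_sup_left, inf_comm N H, ← h₁, mul_comm] at h₂
  rw [← mul_right_cancel₀ (index_ne_zero_of_finite : (N.subgroupOf H).index ≠ 0) h₂]
  exact relIndex_dvd_index_of_le le_sup_left

theorem relIndex_dvd_relIndex_of_le_normalizer [Finite G] (H : Subgroup G) {N K : Subgroup G}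
    (hNK : N ≤ K) (hK : K ≤ normalizer (N : Set G)) : H.relIndex N ∣ H.relIndex K := by
  have : (N.subgroupOf K).Normal := (normal_subgroupOf_iff_le_normalizer hNK).2 hK
  rw [← relIndex_subgroupOf hNK]
  exact relIndex_dvd_index_of_normal_right _

theorem card_inf_eq_gcd_of_coprime_index {A N : Subgroup G} (hA : (Nat.card A).Coprime A.index)
    (hN : A.relIndex N ∣ A.index) :
    Nat.card (N ⊓ A : Subgroup G) = (Nat.card N).gcd (Nat.card A) := by
  have hcard : Nat.card (N ⊓ A : Subgroup G) * A.relIndex N = Nat.card N := by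
    simpa [inf_comm] using relIndex_inf_mul_relIndex ⊥ A N
  rw [← hcard, Nat.Coprime.gcd_mul_right_cancel _ (hA.coprime_dvd_right hN).symm,
    Nat.gcd_eq_left (card_dvd_of_le inf_le_right)]

theorem card_mul_card_eq_card_of_coprime [Finite G] {A B : Subgroup G}
    (hfact : ∀ g : G, ∃ a ∈ A, ∃ b ∈ B, g = a * b) (hcop : (Nat.card A).Coprime (Nat.card B)) :
    Nat.card A * Nat.card B = Nat.card G := by
  refine le_antisymm (Nat.le_of_dvd Nat.card_pos
    (hcop.mul_dvd_of_dvd_of_dvd A.card_subgroup_dvd_card B.card_subgroup_dvd_card)) ?_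
  rw [← Nat.card_prod]
  refine Nat.card_le_card_of_surjective (fun x : A × B => (x.1 : G) * x.2) fun g => ?_
  obtain ⟨a, ha, b, hb, rfl⟩ := hfact g
  exact ⟨(⟨a, ha⟩, ⟨b, hb⟩), rfl⟩

theorem index_eq_card_of_card_mul_card_eq [Finite G] {A B : Subgroup G}
    (h : Nat.card A * Nat.card B = Nat.card G) : A.index = Nat.card B := by
  rw [← index_mul_card A, mul_comm] at h
  exact (Nat.eq_of_mul_eq_mul_right Nat.card_pos h).symm

end Subgroup

section PGroup

variable {H : Type*} [Group H]

theorem isPGroup_iff_of_card_eq {K : Type*} [Group K] [Finite H] [Finite K] {p : ℕ}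
    [Fact p.Prime] (h : Nat.card H = Nat.card K) : IsPGroup p H ↔ IsPGroup p K := by
  simp only [IsPGroup.iff_card, h]

theorem exists_ne_one_orderOf_coprime_of_not_isPGroup [Finite H] {p : ℕ} (hp : p.Prime)
    (h : ¬ IsPGroup p H) : ∃ g : H, g ≠ 1 ∧ (orderOf g).Coprime p := by
  obtain ⟨q, hq, hqH, hqp⟩ : ∃ q, q.Prime ∧ q ∣ Nat.card H ∧ q ≠ p := by
    by_contra! hall
    exact h (IsPGroup.of_card
      (Nat.eq_prime_pow_of_unique_prime_dvd Nat.card_pos.ne' fun hq hqH => hall _ hq hqH))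
  have := Fact.mk hq
  obtain ⟨g, hg⟩ := exists_prime_orderOf_dvd_card' q hqH
  refine ⟨g, fun h1 => hq.one_lt.ne' ?_, hg ▸ (Nat.coprime_primes hq hp).2 hqp⟩
  rw [← hg, h1, orderOf_one]

theorem conj_eq_self_of_isPGroup {p : ℕ} {W : Subgroup H} (hW : IsPGroup p W) {z δ : H}
    (hz : z ∈ W) (hδW : δ ∈ normalizer (W : Set H)) (hδ : (orderOf δ).Coprime p)
    (hc : Commute δ (z * δ * z⁻¹)) : z * δ * z⁻¹ = δ := by
  have hcW : δ⁻¹ * (z * δ * z⁻¹) ∈ W := by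
    have := (mem_normalizer_iff.1 (inv_mem hδW) z).1 hz
    simpa [mul_assoc] using mul_mem this (inv_mem hz)
  have hpow : (δ⁻¹ * (z * δ * z⁻¹)) ^ orderOf δ = 1 := by
    rw [hc.inv_left.mul_pow, conj_pow, inv_pow, pow_orderOf_eq_one]
    group
  have hord := (hW.orderOf_coprime hδ.symm ⟨_, hcW⟩).eq_one_of_dvd
    (by rw [orderOf_mk]; exact orderOf_dvd_of_pow_eq_one hpow)
  rw [orderOf_eq_one_iff, Subtype.ext_iff, coe_one, inv_mul_eq_one] at hord
  exact hord.symm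

theorem fittingSubgroup_le_of_forall_isPGroup_le [Finite H] {K : Subgroup H}
    (hK : ∀ (p : ℕ) (W : Subgroup H), p.Prime → W.Normal → IsPGroup p W → W ≤ K) :
    fittingSubgroup H ≤ K := by
  refine sSup_le fun P ⟨hP, hnil⟩ => ?_
  rw [← subgroupOf_eq_top, ← index_eq_one, Nat.eq_one_iff_not_exists_prime_dvd]
  intro p hp hdvd
  have := Fact.mk hp
  obtain ⟨Q⟩ := Sylow.nonempty (p := p) (G := P)
  have : ((Q : Subgroup P).map P.subtype).Normal := by
    have := Q.characteristic_of_normal inferInstance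
    infer_instance
  have hQ : (Q : Subgroup P) ≤ K.subgroupOf P :=
    map_le_iff_le_comap.1 (hK p _ hp this (Q.isPGroup'.map _))
  exact Q.not_dvd_index (hdvd.trans (index_dvd_of_le hQ))

end PGroup

section Quasisimple

variable {H : Type*} [Group H]

theorem IsQuasisimple.eq_top_or_le_center {Q : Type*} [Group Q] (hQ : IsQuasisimple Q)
    (N : Subgroup Q) [N.Normal] : N = ⊤ ∨ N ≤ center Q := by
  have := hQ.2.1
  rcases IsSimpleGroup.eq_bot_or_eq_top_of_normal _
      (Normal.map ‹_› _ (QuotientGroup.mk'_surjective (center Q))) with h | h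
  · rw [Subgroup.map_eq_bot_iff, QuotientGroup.ker_mk'] at h
    exact Or.inr h
  · have hsup : N ⊔ center Q = ⊤ := by
      rw [← QuotientGroup.ker_mk' (center Q), ← comap_map_eq, h, comap_top]
    exact Or.inl (eq_top_iff.2 (hQ.1 ▸ Normal.commutator_le_of_self_sup_commutative_eq_top hsup
      inferInstance))

theorem mem_centralizer_of_commutator_eq_top {Q C : Subgroup H} (hQ : commutator Q = ⊤)
    (hC : C ≤ centralizer (Q : Set H)) {e : H} (heC : ∀ c ∈ C, e * c * e⁻¹ ∈ C)
    (hQe : ∀ a ∈ Q, a⁻¹ * (e⁻¹ * a * e) ∈ C) : e ∈ centralizer (Q : Set H) := by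
  have hcomm (a : Q) {b : H} (hb : b ∈ Q) : Commute ((a : H)⁻¹ * (e⁻¹ * a * e)) b :=
    (mem_centralizer_iff.1 (hC (hQe a a.2)) b hb).symm
  -- `a ↦ a⁻¹ a^e` is a homomorphism with pairwise commuting values, so it kills the perfect `Q`.
  let φ : Q →* H :=
    { toFun a := (a : H)⁻¹ * (e⁻¹ * a * e)
      map_one' := by simp
      map_mul' a b := by
        calc ((a * b : Q) : H)⁻¹ * (e⁻¹ * (a * b : Q) * e)
            = (b : H)⁻¹ * ((a : H)⁻¹ * (e⁻¹ * a * e)) * (e⁻¹ * b * e) := by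
              simp only [coe_mul]; group
          _ = (a : H)⁻¹ * (e⁻¹ * a * e) * (b : H)⁻¹ * (e⁻¹ * b * e) := by
            rw [(hcomm a b.2).inv_right.eq]
          _ = _ := by group }
  have hφ (a b : Q) : Commute (φ a) (φ b) := by
    refine (hcomm a (inv_mem b.2)).mul_right ((Commute.conj_iff e).1 ?_)
    rw [show e * (e⁻¹ * b * e) * e⁻¹ = b by group]
    exact (mem_centralizer_iff.1 (hC (heC _ (hQe a a.2))) b b.2).symm
  have hker : commutator Q ≤ φ.ker := by
    rw [_root_.commutator_def, commutator_le]
    intro a _ b _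
    rw [MonoidHom.mem_ker, map_commutatorElement, commutatorElement_eq_one_iff_mul_comm]
    exact hφ a b
  refine mem_centralizer_iff.2 fun a ha => ?_
  have h1 : a = e⁻¹ * a * e := inv_mul_eq_one.1 (hker (hQ ▸ mem_top _) : φ ⟨a, ha⟩ = 1)
  conv_rhs => rw [h1]
  group

theorem Subgroup.IsSubnormalChain.le_or_le_centralizer {Q E : Subgroup H}
    (hsub : Q.IsSubnormalChain) (hQ : IsQuasisimple Q) [hE : E.Normal] :
    Q ≤ E ∨ E ≤ centralizer (Q : Set H) := by
  obtain ⟨n, c, hc0, hctop, hchain⟩ := hsub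
  have hQc (k : Fin (n + 1)) : Q ≤ c k := by
    induction k using Fin.induction with
    | zero => exact hc0.ge
    | succ i ih => exact ih.trans (hchain i).1
  suffices ∀ k, Q ≤ E ∨ E ⊓ c k ≤ centralizer (Q : Set H) by
    simpa [hctop] using this (Fin.last n)
  intro k
  induction k using Fin.induction with
  | zero =>
    rw [hc0]
    have := hE.subgroupOf Q
    refine (hQ.eq_top_or_le_center (E.subgroupOf Q)).imp subgroupOf_eq_top.1 fun h x hx => ?_
    refine mem_centralizer_iff.2 fun q hq => ?_
    exact congrArg Subtype.val (mem_center_iff.1 (h (x := ⟨x, hx.2⟩) hx.1) ⟨q, hq⟩)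
  | succ i ih =>
    refine ih.imp_right fun hcent e he => ?_
    obtain ⟨heE, hec⟩ := mem_inf.1 he
    refine mem_centralizer_of_commutator_eq_top hQ.1 hcent
      (fun c hc => ⟨hE.conj_mem c hc.1 e, (hchain i).2 e hec c hc.2⟩) fun a ha => mem_inf.2 ⟨?_, ?_⟩
    · simpa [mul_assoc] using mul_mem (hE.conj_mem _ (inv_mem heE) a⁻¹) heE
    · have := (hchain i).2 e⁻¹ (inv_mem hec) a (hQc _ ha)
      exact mul_mem (inv_mem (hQc _ ha)) (by simpa using this)

end Quasisimple

section Conj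

variable {G : Type*} [Group G]

theorem conjSubgroup_eq_iff_mem_normalizer {g : G} {S : Subgroup G} :
    conjSubgroup g S = S ↔ g ∈ normalizer (S : Set G) :=
  mem_normalizer_iff_map_conj_eq.symm

theorem conj_mem_conjSubgroup {g s : G} {S : Subgroup G} (hs : s ∈ S) :
    g * s * g⁻¹ ∈ conjSubgroup g S :=
  mem_map_of_mem _ hs

theorem card_conjSubgroup (g : G) (S : Subgroup G) : Nat.card (conjSubgroup g S) = Nat.card S :=
  card_map_of_injective (MulAut.conj g).injective

theorem conjSubgroup_one (S : Subgroup G) : conjSubgroup 1 S = S := by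
  ext; simp [conjSubgroup]

theorem conjSubgroup_mul (g h : G) (S : Subgroup G) :
    conjSubgroup (g * h) S = conjSubgroup g (conjSubgroup h S) := by
  ext; simp [conjSubgroup, mul_assoc]

end Conj

section PermutedFamily

variable {G : Type*} [Group G] {ι : Type*} {S : ι → Subgroup G}

theorem iSup_normal_of_perm (hperm : ∀ (g : G) (i : ι), ∃ j, conjSubgroup g (S i) = S j) :
    (⨆ i, S i).Normal where
  conj_mem n hn g := by
    have : conjSubgroup g (⨆ i, S i) ≤ ⨆ i, S i := by
      refine (Subgroup.map_iSup _ S).trans_le (iSup_le fun i => ?_)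
      obtain ⟨j, hj⟩ := hperm g i
      exact hj.trans_le (le_iSup S j)
    exact this (conj_mem_conjSubgroup hn)

theorem iSup_le_normalizer_of_commute
    (hcomm : ∀ i j, i ≠ j → ∀ x ∈ S i, ∀ y ∈ S j, x * y = y * x) (i : ι) :
    ⨆ k, S k ≤ normalizer (S i : Set G) := by
  refine iSup_le fun k => ?_
  rcases eq_or_ne k i with rfl | hki
  · exact le_normalizer
  · exact le_trans (fun x hx => mem_centralizer_iff.2 fun y hy => hcomm i k hki.symm y hy x hx)
      (centralizer_le_normalizer _)

theorem mem_normalizer_of_conj_mem (hindep : iSupIndep S)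
    (hperm : ∀ (g : G) (i : ι), ∃ j, conjSubgroup g (S i) = S j) {i : ι} {g s : G}
    (hs : s ∈ S i) (hs1 : s ≠ 1) (hgs : g * s * g⁻¹ ∈ S i) : g ∈ normalizer (S i : Set G) := by
  obtain ⟨j, hj⟩ := hperm g i
  rcases eq_or_ne j i with rfl | hji
  · exact conjSubgroup_eq_iff_mem_normalizer.1 hj
  · have := disjoint_def.1 (hindep.pairwiseDisjoint hji) (hj ▸ conj_mem_conjSubgroup hs) hgs
    exact absurd (by simpa using this) hs1

theorem iInf_normalizer_normal (hperm : ∀ (g : G) (i : ι), ∃ j, conjSubgroup g (S i) = S j)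
    (P : ι → Prop) (hP : ∀ g i j, conjSubgroup g (S i) = S j → P i → P j) :
    (⨅ i : {i // P i}, normalizer (S i.1 : Set G)).Normal where
  conj_mem x hx g := by
    refine mem_iInf.2 fun ⟨i, hi⟩ => ?_
    obtain ⟨j, hj⟩ := hperm g⁻¹ i
    have hxj : conjSubgroup x (S j) = S j :=
      conjSubgroup_eq_iff_mem_normalizer.2 (mem_iInf.1 hx ⟨j, hP _ _ _ hj hi⟩)
    rw [← conjSubgroup_eq_iff_mem_normalizer, conjSubgroup_mul, conjSubgroup_mul, hj, hxj, ← hj,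
      ← conjSubgroup_mul, mul_inv_cancel, conjSubgroup_one]

theorem card_inf_eq_of_conjSubgroup_eq [Finite G]
    (hperm : ∀ (g : G) (i : ι), ∃ j, conjSubgroup g (S i) = S j)
    (hcomm : ∀ i j, i ≠ j → ∀ x ∈ S i, ∀ y ∈ S j, x * y = y * x) {A : Subgroup G}
    (hA : (Nat.card A).Coprime A.index) {g : G} {i j : ι} (h : conjSubgroup g (S i) = S j) :
    Nat.card (S i ⊓ A : Subgroup G) = Nat.card (S j ⊓ A : Subgroup G) := by
  have := iSup_normal_of_perm hperm
  have key (k : ι) : Nat.card (S k ⊓ A : Subgroup G) = (Nat.card (S k)).gcd (Nat.card A) := by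
    refine card_inf_eq_gcd_of_coprime_index hA ?_
    rw [← relIndex_top_right]
    exact (A.relIndex_dvd_relIndex_of_le_normalizer (le_iSup S k)
      (iSup_le_normalizer_of_commute hcomm k)).trans
        (A.relIndex_dvd_relIndex_of_le_normalizer le_top (normalizer_eq_top _).ge)
  rw [key, key, ← h, card_conjSubgroup]

theorem iInf_normalizer_not_isPGroup_normal [Finite G]
    (hperm : ∀ (g : G) (i : ι), ∃ j, conjSubgroup g (S i) = S j)
    (hcomm : ∀ i j, i ≠ j → ∀ x ∈ S i, ∀ y ∈ S j, x * y = y * x) {A : Subgroup G}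
    (hA : (Nat.card A).Coprime A.index) :
    (⨅ i : {i // ¬ ∃ p : ℕ, p.Prime ∧ IsPGroup p (S i ⊓ A : Subgroup G)},
      normalizer (S i.1 : Set G)).Normal :=
  iInf_normalizer_normal hperm _ fun _ _ _ h hi ⟨p, hp, hpj⟩ => hi ⟨p, hp, by
    have := Fact.mk hp
    exact (isPGroup_iff_of_card_eq (card_inf_eq_of_conjSubgroup_eq hperm hcomm hA h)).2 hpj⟩

end PermutedFamily

section GeneralizedFitting

variable {G : Type*} [Group G] {ι : Type*} {S : ι → Subgroup G}

theorem le_normalizer_of_isPGroup (hindep : iSupIndep S)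
    (hperm : ∀ (g : G) (i : ι), ∃ j, conjSubgroup g (S i) = S j)
    (hcomm : ∀ i j, i ≠ j → ∀ x ∈ S i, ∀ y ∈ S j, x * y = y * x) {p : ℕ} {W : Subgroup G}
    (hW : IsPGroup p W) {i : ι} {δ : G} (hδ : δ ∈ S i) (hδ1 : δ ≠ 1) (hδp : (orderOf δ).Coprime p)
    (hδW : δ ∈ normalizer (W : Set G)) : W ≤ normalizer (S i : Set G) := by
  intro z hz
  obtain ⟨j, hj⟩ := hperm z i
  rcases eq_or_ne j i with rfl | hji
  · exact conjSubgroup_eq_iff_mem_normalizer.1 hj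
  · have hc : Commute δ (z * δ * z⁻¹) := hcomm i j hji.symm δ hδ _ (hj ▸ conj_mem_conjSubgroup hδ)
    exact mem_normalizer_of_conj_mem hindep hperm hδ hδ1
      ((conj_eq_self_of_isPGroup hW hz hδW hδp hc).symm ▸ hδ)

theorem map_generalizedFitting_le_normalizer [Finite G] (hindep : iSupIndep S)
    (hperm : ∀ (g : G) (i : ι), ∃ j, conjSubgroup g (S i) = S j)
    (hcomm : ∀ i j, i ≠ j → ∀ x ∈ S i, ∀ y ∈ S j, x * y = y * x) (A : Subgroup G) {i : ι}
    (hi : ¬ ∃ p : ℕ, p.Prime ∧ IsPGroup p (S i ⊓ A : Subgroup G)) :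
    (generalizedFitting A).map A.subtype ≤ normalizer (S i : Set G) := by
  have hcoprime_elt (p : ℕ) (hp : p.Prime) : ∃ δ ∈ S i ⊓ A, δ ≠ 1 ∧ (orderOf δ).Coprime p := by
    obtain ⟨δ, hδ1, hδp⟩ := exists_ne_one_orderOf_coprime_of_not_isPGroup hp fun h => hi ⟨p, hp, h⟩
    exact ⟨δ, δ.2, by simpa using hδ1, by rwa [orderOf_coe]⟩
  rw [map_le_iff_le_comap, generalizedFitting]
  refine sup_le (fittingSubgroup_le_of_forall_isPGroup_le fun p W hp hW hWp => ?_) (sSup_le ?_)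
  · obtain ⟨δ, hδ, hδ1, hδp⟩ := hcoprime_elt p hp
    have hδW : δ ∈ normalizer (W.map A.subtype : Set G) :=
      le_normalizer_map A.subtype (mem_map_of_mem _ (x := (⟨δ, (mem_inf.1 hδ).2⟩ : A))
        (by rw [normalizer_eq_top_iff.2 hW]; trivial))
    exact map_le_iff_le_comap.1
      (le_normalizer_of_isPGroup hindep hperm hcomm (hWp.map _) (mem_inf.1 hδ).1 hδ1 hδp hδW)
  · rintro Q ⟨hsub, hQ⟩
    have := (iSup_normal_of_perm hperm).subgroupOf A
    rcases IsSubnormalChain.le_or_le_centralizer hsub hQ (E := (⨆ k, S k).subgroupOf A) with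
      hle | hcent
    · exact hle.trans fun x hx => iSup_le_normalizer_of_commute hcomm i hx
    · obtain ⟨d, hd, hd1, -⟩ := hcoprime_elt 2 Nat.prime_two
      obtain ⟨hdS, hdA⟩ := mem_inf.1 hd
      intro x hx
      have hxd : x * ⟨d, hdA⟩ = ⟨d, hdA⟩ * x :=
        mem_centralizer_iff.1 (hcent (show ⟨d, hdA⟩ ∈ (⨆ k, S k).subgroupOf A from le_iSup S i hdS))
          x hx
      refine mem_normalizer_of_conj_mem hindep hperm hdS hd1 ?_
      have : (x : G) * d * (x : G)⁻¹ = d := mul_inv_eq_of_eq_mul (congrArg Subtype.val hxd)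
      rwa [← this] at hdS

end GeneralizedFitting

theorem KA_KB_normal_and_contain_generalizedFitting_general
{G : Type*} [Group G] [Finite G] (A B : Subgroup G)
    (hfact : ∀ g : G, ∃ a ∈ A, ∃ b ∈ B, g = a * b)
    (hcop : Nat.Coprime (Nat.card A) (Nat.card B))
    (m : ℕ) (S : Fin m → Subgroup G)
    (hindep : iSupIndep S)
    (hcomm : ∀ i j, i ≠ j → ∀ x ∈ S i, ∀ y ∈ S j, x * y = y * x)
    (hperm : ∀ (g : G) (i : Fin m), ∃ j, conjSubgroup g (S i) = S j)
    (KA KB : Subgroup G)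
    (hKA : KA = ⨅ i : {i : Fin m // ¬ ∃ p : ℕ, p.Prime ∧
      IsPGroup p (S i ⊓ A : Subgroup G)}, Subgroup.normalizer (S i.1 : Set G))
    (hKB : KB = ⨅ i : {i : Fin m // ¬ ∃ p : ℕ, p.Prime ∧
      IsPGroup p (S i ⊓ B : Subgroup G)}, Subgroup.normalizer (S i.1 : Set G)) :
    KA.Normal ∧ KB.Normal ∧
    Subgroup.map A.subtype (generalizedFitting A) ≤ KA ∧
    Subgroup.map B.subtype (generalizedFitting B) ≤ KB := by
  subst hKA hKB
  have hcard := card_mul_card_eq_card_of_coprime hfact hcop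
  have hA : (Nat.card A).Coprime A.index := index_eq_card_of_card_mul_card_eq hcard ▸ hcop
  have hB : (Nat.card B).Coprime B.index :=
    index_eq_card_of_card_mul_card_eq ((mul_comm _ _).trans hcard) ▸ hcop.symm
  exact ⟨iInf_normalizer_not_isPGroup_normal hperm hcomm hA,
    iInf_normalizer_not_isPGroup_normal hperm hcomm hB,
    le_iInf fun i => map_generalizedFitting_le_normalizer hindep hperm hcomm A i.2,
    le_iInf fun i => map_generalizedFitting_le_normalizer hindep hperm hcomm B i.2⟩

/-- In a coprimely factorized finite group `G = AB` with trivial soluble radical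
and `F*(G) = S 1 × ⋯ × S m` a direct product of nonabelian simple subgroups
permuted by `G`, the subgroups `K_A = ⋂ {N_G(S i) : S i ⊓ A not a p-group}` and
`K_B = ⋂ {N_G(S i) : S i ⊓ B not a p-group}` are normal in `G`, `F*(A) ≤ K_A`
and `F*(B) ≤ K_B`. -/
theorem KA_KB_normal_and_contain_generalizedFitting
{G : Type*} [Group G] [Finite G] (A B : Subgroup G)
    (hfact : ∀ g : G, ∃ a ∈ A, ∃ b ∈ B, g = a * b)
    (hcop : Nat.Coprime (Nat.card A) (Nat.card B))
    (hrad : solubleRadical G = ⊥)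
    (m : ℕ) (S : Fin m → Subgroup G)
    (hsimple : ∀ i, IsSimpleGroup (S i))
    (hna : ∀ i, ∃ a b : S i, a * b ≠ b * a)
    (hindep : iSupIndep S)
    (hsup : ⨆ i, S i = generalizedFitting G)
    (hcomm : ∀ i j, i ≠ j → ∀ x ∈ S i, ∀ y ∈ S j, x * y = y * x)
    (hperm : ∀ (g : G) (i : Fin m), ∃ j, conjSubgroup g (S i) = S j)
    (KA KB : Subgroup G)
    (hKA : KA = ⨅ i : {i : Fin m // ¬ ∃ p : ℕ, p.Prime ∧
      IsPGroup p (S i ⊓ A : Subgroup G)}, Subgroup.normalizer (S i.1 : Set G))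
    (hKB : KB = ⨅ i : {i : Fin m // ¬ ∃ p : ℕ, p.Prime ∧
      IsPGroup p (S i ⊓ B : Subgroup G)}, Subgroup.normalizer (S i.1 : Set G)) :
    KA.Normal ∧ KB.Normal ∧
    Subgroup.map A.subtype (generalizedFitting A) ≤ KA ∧
    Subgroup.map B.subtype (generalizedFitting B) ≤ KB :=
  KA_KB_normal_and_contain_generalizedFitting_general A B hfact hcop m S hindep hcomm hperm KA KB
    hKA hKB
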